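/- arXiv:2402.11857 — 3 statements merged into one kernel-verified Lean document; each statement's English description precedes it below -/
import Mathlib

section
/- (Lemma 1) In LIEC-SGD with a δ-contraction compressor C satisfying E[C(x)] = δx, if each stochastic gradient satisfies E‖∇fᵢ(x,ξ)‖² ≤ M² and the stochastic gradients across workers are independent, then the global server error satisfies E‖eₜ‖² ≤ 4(1−δ)(2(2−δ) + δ²(N−1))M² / (δ²N) for all t. -/
open MeasureTheory

section Aux

variable {Ω : Type*} [MeasurableSpace Ω] {μ : Measure Ω}
variable {E : Type*} [NormedAddCommGroup E] [InnerProductSpace ℝ E]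

lemma memLp_sq_int {f : Ω → E} (hf : MemLp f 2 μ) :
    Integrable (fun ω => ‖f ω‖ ^ 2) μ :=
  (memLp_two_iff_integrable_sq_norm hf.1).mp hf

lemma inner_int {f g : Ω → E} (hf : MemLp f 2 μ) (hg : MemLp g 2 μ) :
    Integrable (fun ω => (inner ℝ (f ω) (g ω) : ℝ)) μ := by
  refine Integrable.mono' ((memLp_sq_int hf).add (memLp_sq_int hg))
    (hf.1.inner hg.1) (Filter.Eventually.of_forall fun ω => ?_)
  have h1 := abs_real_inner_le_norm (f ω) (g ω)
  have h2 : ‖f ω‖ * ‖g ω‖ ≤ ‖f ω‖ ^ 2 + ‖g ω‖ ^ 2 := by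
    nlinarith [sq_nonneg (‖f ω‖ - ‖g ω‖)]
  calc ‖(inner ℝ (f ω) (g ω) : ℝ)‖ = |(inner ℝ (f ω) (g ω) : ℝ)| := Real.norm_eq_abs _
    _ ≤ ‖f ω‖ * ‖g ω‖ := h1
    _ ≤ ‖f ω‖ ^ 2 + ‖g ω‖ ^ 2 := h2

lemma young_norm {β : ℝ} (hβ : 0 < β) (a b : E) :
    ‖a + b‖ ^ 2 ≤ (1 + β) * ‖a‖ ^ 2 + (1 + β⁻¹) * ‖b‖ ^ 2 := by
  have h := norm_add_sq_real a b
  have h2 := real_inner_le_norm a b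
  have hb : (0:ℝ) < β⁻¹ := inv_pos.mpr hβ
  have hββ : β * β⁻¹ = 1 := mul_inv_cancel₀ hβ.ne'
  have h3 : 2 * (‖a‖ * ‖b‖) ≤ β * ‖a‖ ^ 2 + β⁻¹ * ‖b‖ ^ 2 := by
    nlinarith [mul_nonneg hb.le (sq_nonneg (β * ‖a‖ - ‖b‖))]
  nlinarith

lemma two_sq_norm (a b : E) : ‖a‖ ^ 2 ≤ 2 * ‖b‖ ^ 2 + 2 * ‖b - a‖ ^ 2 := by
  have h : ‖a‖ ≤ ‖b‖ + ‖b - a‖ := by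
    have h1 := norm_add_le b (a - b)
    have h2 : b + (a - b) = a := by abel
    rw [h2, norm_sub_rev] at h1
    exact h1
  have h2 : ‖a‖ ^ 2 ≤ (‖b‖ + ‖b - a‖) ^ 2 := pow_le_pow_left₀ (norm_nonneg a) h 2
  nlinarith [sq_nonneg (‖b‖ - ‖b - a‖)]

end Aux

/-- (Lemma 1) In LIEC-SGD with a `δ`-contraction compressor `C` satisfying
`E[C x] = δ • x`, if each stochastic gradient has second moment bounded by `M²` and the
stochastic gradients across workers are independent, then the global server error
satisfies `E‖e t‖² ≤ 4(1−δ)(2(2−δ) + δ²(N−1))M² / (δ²N)` for all `t`.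
Here `q t i = C(g t i)` is the compressed stochastic gradient of worker `i`,
`v t = e t + (1/N)∑ i q t i`, `e (t+1) = v t − C(v t)` on non-reset steps, and `e` is
reset to `0` every `⌊1/δ⌋` iterations. Unbiased scaling of `C` together with
independence of the workers' gradients yield the cross-term identities `hcross` and
the bound `hindep` on gradient cross terms. -/
theorem liec_server_error_bound (d N : ℕ) (hN : 0 < N) (δ M : ℝ)
    (hδ0 : 0 < δ) (hδ1 : δ < 1) (hM : 0 ≤ M)
    {Ω : Type*} [MeasurableSpace Ω] (μ : Measure Ω) [IsProbabilityMeasure μ]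
    (g q : ℕ → Fin N → Ω → EuclideanSpace ℝ (Fin d))
    (e v : ℕ → Ω → EuclideanSpace ℝ (Fin d))
    (hL2g : ∀ t i, MemLp (g t i) 2 μ) (hL2q : ∀ t i, MemLp (q t i) 2 μ)
    (hL2e : ∀ t, MemLp (e t) 2 μ)
    (he0 : ∀ ω, e 0 ω = 0)
    (hv : ∀ t ω, v t ω = e t ω + (N : ℝ)⁻¹ • ∑ i, q t i ω)
    (hreset : ∀ t, (t + 1) % ⌊1 / δ⌋₊ = 0 → ∀ ω, e (t + 1) ω = 0)
    (hcontr_e : ∀ t, (t + 1) % ⌊1 / δ⌋₊ ≠ 0 →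
      ∫ ω, ‖e (t + 1) ω‖ ^ 2 ∂μ ≤ (1 - δ) * ∫ ω, ‖v t ω‖ ^ 2 ∂μ)
    (hcontr_q : ∀ t i,
      ∫ ω, ‖g t i ω - q t i ω‖ ^ 2 ∂μ ≤ (1 - δ) * ∫ ω, ‖g t i ω‖ ^ 2 ∂μ)
    (hsecond : ∀ t i, ∫ ω, ‖g t i ω‖ ^ 2 ∂μ ≤ M ^ 2)
    (hcross : ∀ t (i j : Fin N), i ≠ j →
      ∫ ω, (inner ℝ (q t i ω) (q t j ω) : ℝ) ∂μ
        = δ ^ 2 * ∫ ω, (inner ℝ (g t i ω) (g t j ω) : ℝ) ∂μ)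
    (hindep : ∀ t (i j : Fin N), i ≠ j →
      ∫ ω, (inner ℝ (g t i ω) (g t j ω) : ℝ) ∂μ ≤ M ^ 2)
    (t : ℕ) :
    ∫ ω, ‖e t ω‖ ^ 2 ∂μ
      ≤ 4 * (1 - δ) * (2 * (2 - δ) + δ ^ 2 * ((N : ℝ) - 1)) * M ^ 2 / (δ ^ 2 * N) := by
  have hδ1' : (0:ℝ) < 1 - δ := by linarith
  have hn1 : (1:ℝ) ≤ (N:ℝ) := by exact_mod_cast hN
  have hn0 : (0:ℝ) < (N:ℝ) := by linarith
  set K : ℝ := 2 * (2 - δ) + δ ^ 2 * ((N : ℝ) - 1) with hK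
  have hK0 : 0 ≤ K := by nlinarith [sq_nonneg δ]
  set B : ℝ := 4 * (1 - δ) * K * M ^ 2 / (δ ^ 2 * (N:ℝ)) with hB
  have hM2 : (0:ℝ) ≤ M ^ 2 := sq_nonneg M
  have hB0 : 0 ≤ B := by
    apply div_nonneg
    · positivity
    · positivity
  -- bound on the second moment of each compressed gradient
  have hq2 : ∀ t i, ∫ ω, ‖q t i ω‖ ^ 2 ∂μ ≤ 2 * (2 - δ) * M ^ 2 := by
    intro t i
    have hig : Integrable (fun ω => ‖g t i ω‖ ^ 2) μ := memLp_sq_int (hL2g t i)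
    have hid : Integrable (fun ω => ‖g t i ω - q t i ω‖ ^ 2) μ :=
      memLp_sq_int ((hL2g t i).sub (hL2q t i))
    have hle : ∫ ω, ‖q t i ω‖ ^ 2 ∂μ
        ≤ ∫ ω, (2 * ‖g t i ω‖ ^ 2 + 2 * ‖g t i ω - q t i ω‖ ^ 2) ∂μ := by
      refine integral_mono (memLp_sq_int (hL2q t i)) ((hig.const_mul 2).add (hid.const_mul 2))
        fun ω => ?_
      simpa using two_sq_norm (q t i ω) (g t i ω)
    have heq : ∫ ω, (2 * ‖g t i ω‖ ^ 2 + 2 * ‖g t i ω - q t i ω‖ ^ 2) ∂μ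
        = 2 * ∫ ω, ‖g t i ω‖ ^ 2 ∂μ + 2 * ∫ ω, ‖g t i ω - q t i ω‖ ^ 2 ∂μ := by
      rw [integral_add (hig.const_mul 2) (hid.const_mul 2), integral_const_mul,
        integral_const_mul]
    have h1 := hsecond t i
    have h2 := (hcontr_q t i).trans (by nlinarith : (1 - δ) * ∫ ω, ‖g t i ω‖ ^ 2 ∂μ
        ≤ (1 - δ) * M ^ 2)
    rw [heq] at hle
    nlinarith
  -- bound on the second moment of the sum of compressed gradients
  have hsum2 : ∀ t, ∫ ω, ‖∑ i, q t i ω‖ ^ 2 ∂μ ≤ (N:ℝ) * (K * M ^ 2) := by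
    intro t
    have hexp : ∀ ω, ‖∑ i, q t i ω‖ ^ 2
        = ∑ i, ∑ j, (inner ℝ (q t i ω) (q t j ω) : ℝ) := by
      intro ω
      rw [← real_inner_self_eq_norm_sq, sum_inner]
      exact Finset.sum_congr rfl fun i _ => inner_sum _ _ _
    have hint : ∀ i j : Fin N, Integrable (fun ω => (inner ℝ (q t i ω) (q t j ω) : ℝ)) μ :=
      fun i j => inner_int (hL2q t i) (hL2q t j)
    have heq : ∫ ω, ‖∑ i, q t i ω‖ ^ 2 ∂μ
        = ∑ i, ∑ j, ∫ ω, (inner ℝ (q t i ω) (q t j ω) : ℝ) ∂μ := by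
      simp_rw [hexp]
      rw [integral_finset_sum _ fun i _ => integrable_finset_sum _ fun j _ => hint i j]
      exact Finset.sum_congr rfl fun i _ => integral_finset_sum _ fun j _ => hint i j
    rw [heq]
    have hrow : ∀ i : Fin N, ∑ j, ∫ ω, (inner ℝ (q t i ω) (q t j ω) : ℝ) ∂μ
        ≤ K * M ^ 2 := by
      intro i
      rw [← Finset.add_sum_erase _ _ (Finset.mem_univ i)]
      have hdiag : ∫ ω, (inner ℝ (q t i ω) (q t i ω) : ℝ) ∂μ ≤ 2 * (2 - δ) * M ^ 2 := by
        have : (fun ω => (inner ℝ (q t i ω) (q t i ω) : ℝ)) = fun ω => ‖q t i ω‖ ^ 2 := by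
          funext ω; exact real_inner_self_eq_norm_sq _
        rw [this]; exact hq2 t i
      have hoff : ∑ j ∈ Finset.univ.erase i, ∫ ω, (inner ℝ (q t i ω) (q t j ω) : ℝ) ∂μ
          ≤ ((N:ℝ) - 1) * (δ ^ 2 * M ^ 2) := by
        have hcard : (Finset.univ.erase i).card = N - 1 := by
          rw [Finset.card_erase_of_mem (Finset.mem_univ i), Finset.card_univ, Fintype.card_fin]
        calc ∑ j ∈ Finset.univ.erase i, ∫ ω, (inner ℝ (q t i ω) (q t j ω) : ℝ) ∂μ
            ≤ ∑ j ∈ Finset.univ.erase i, δ ^ 2 * M ^ 2 := by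
              refine Finset.sum_le_sum fun j hj => ?_
              have hij : i ≠ j := fun h => (Finset.mem_erase.mp hj).1 h.symm
              rw [hcross t i j hij]
              have := hindep t i j hij
              nlinarith [sq_nonneg δ]
          _ = ((N:ℝ) - 1) * (δ ^ 2 * M ^ 2) := by
              rw [Finset.sum_const, hcard, nsmul_eq_mul]
              congr 1
              rw [Nat.cast_sub hN, Nat.cast_one]
      have : 2 * (2 - δ) * M ^ 2 + ((N:ℝ) - 1) * (δ ^ 2 * M ^ 2) = K * M ^ 2 := by
        rw [hK]; ring
      linarith
    calc ∑ i, ∑ j, ∫ ω, (inner ℝ (q t i ω) (q t j ω) : ℝ) ∂μ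
        ≤ ∑ _i : Fin N, K * M ^ 2 := Finset.sum_le_sum fun i _ => hrow i
      _ = (N:ℝ) * (K * M ^ 2) := by
          rw [Finset.sum_const, Finset.card_univ, Fintype.card_fin, nsmul_eq_mul]
  -- the Young split of the virtual iterate
  set β : ℝ := δ / (2 * (1 - δ)) with hβdef
  have hβ0 : 0 < β := div_pos hδ0 (by linarith)
  have hβi0 : 0 < β⁻¹ := inv_pos.mpr hβ0
  have hvbound : ∀ t, ∫ ω, ‖v t ω‖ ^ 2 ∂μ
      ≤ (1 + β) * ∫ ω, ‖e t ω‖ ^ 2 ∂μ + (1 + β⁻¹) * (K * M ^ 2 / (N:ℝ)) := by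
    intro t
    have hL2u : MemLp (fun ω => (N : ℝ)⁻¹ • ∑ i, q t i ω) 2 μ := by
      have h := (memLp_finset_sum' (μ := μ) (p := 2) Finset.univ
        (f := fun i ω => q t i ω) (fun i _ => hL2q t i)).const_smul ((N:ℝ)⁻¹)
      exact h.ae_eq (Filter.Eventually.of_forall fun ω => by
        simp [Finset.sum_apply])
    have hL2v : MemLp (v t) 2 μ :=
      ((hL2e t).add hL2u).ae_eq (Filter.Eventually.of_forall fun ω => (hv t ω).symm)
    have hie : Integrable (fun ω => ‖e t ω‖ ^ 2) μ := memLp_sq_int (hL2e t)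
    have hiu : Integrable (fun ω => ‖(N : ℝ)⁻¹ • ∑ i, q t i ω‖ ^ 2) μ := memLp_sq_int hL2u
    have hstep : ∫ ω, ‖v t ω‖ ^ 2 ∂μ
        ≤ ∫ ω, ((1 + β) * ‖e t ω‖ ^ 2 + (1 + β⁻¹) * ‖(N : ℝ)⁻¹ • ∑ i, q t i ω‖ ^ 2) ∂μ := by
      refine integral_mono (memLp_sq_int hL2v)
        ((hie.const_mul _).add (hiu.const_mul _)) fun ω => ?_
      rw [hv t ω]
      exact young_norm hβ0 _ _
    have hsplit : ∫ ω, ((1 + β) * ‖e t ω‖ ^ 2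
          + (1 + β⁻¹) * ‖(N : ℝ)⁻¹ • ∑ i, q t i ω‖ ^ 2) ∂μ
        = (1 + β) * ∫ ω, ‖e t ω‖ ^ 2 ∂μ
          + (1 + β⁻¹) * ∫ ω, ‖(N : ℝ)⁻¹ • ∑ i, q t i ω‖ ^ 2 ∂μ := by
      rw [integral_add (hie.const_mul _) (hiu.const_mul _), integral_const_mul,
        integral_const_mul]
    have hu2 : ∫ ω, ‖(N : ℝ)⁻¹ • ∑ i, q t i ω‖ ^ 2 ∂μ ≤ K * M ^ 2 / (N:ℝ) := by
      have : ∀ ω, ‖(N : ℝ)⁻¹ • ∑ i, q t i ω‖ ^ 2 = ((N:ℝ)⁻¹) ^ 2 * ‖∑ i, q t i ω‖ ^ 2 := by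
        intro ω
        rw [norm_smul, mul_pow]
        congr 1
        rw [Real.norm_eq_abs, sq_abs]
      simp_rw [this]
      rw [integral_const_mul]
      have h2 := hsum2 t
      have hNi : ((N:ℝ)⁻¹) ^ 2 * ((N:ℝ) * (K * M ^ 2)) = K * M ^ 2 / (N:ℝ) := by
        field_simp
      calc ((N:ℝ)⁻¹) ^ 2 * ∫ ω, ‖∑ i, q t i ω‖ ^ 2 ∂μ
          ≤ ((N:ℝ)⁻¹) ^ 2 * ((N:ℝ) * (K * M ^ 2)) := by
            apply mul_le_mul_of_nonneg_left h2 (by positivity)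
        _ = K * M ^ 2 / (N:ℝ) := hNi
    have h1β : (0:ℝ) ≤ 1 + β⁻¹ := by linarith
    calc ∫ ω, ‖v t ω‖ ^ 2 ∂μ
        ≤ (1 + β) * ∫ ω, ‖e t ω‖ ^ 2 ∂μ
          + (1 + β⁻¹) * ∫ ω, ‖(N : ℝ)⁻¹ • ∑ i, q t i ω‖ ^ 2 ∂μ := hstep.trans hsplit.le
      _ ≤ (1 + β) * ∫ ω, ‖e t ω‖ ^ 2 ∂μ + (1 + β⁻¹) * (K * M ^ 2 / (N:ℝ)) := by
          have := mul_le_mul_of_nonneg_left hu2 h1β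
          linarith
  -- key arithmetic facts
  have hb1 : (1 - δ) * (1 + β) = 1 - δ / 2 := by
    rw [hβdef]; field_simp; ring
  have hb2 : (1 - δ) * (1 + β⁻¹) = (1 - δ) * (2 - δ) / δ := by
    rw [hβdef, inv_div]
    field_simp
    ring
  have harith : (1 - δ / 2) * B + ((1 - δ) * (2 - δ) / δ) * (K * M ^ 2 / (N:ℝ)) ≤ B := by
    have hKM : 0 ≤ K * M ^ 2 := mul_nonneg hK0 hM2
    have e1 : ((1 - δ) * (2 - δ) / δ) * (K * M ^ 2 / (N:ℝ))
        = ((1 - δ) * (2 - δ) * δ * (K * M ^ 2)) / (δ ^ 2 * (N:ℝ)) := by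
      field_simp
    have e2 : (1 - δ / 2) * B
        = ((1 - δ / 2) * (4 * (1 - δ) * (K * M ^ 2))) / (δ ^ 2 * (N:ℝ)) := by
      rw [hB]; ring
    have e3 : B = (4 * (1 - δ) * (K * M ^ 2)) / (δ ^ 2 * (N:ℝ)) := by rw [hB]; ring
    rw [e1, e2, e3, ← add_div, div_le_div_iff_of_pos_right (by positivity)]
    have key : (1 - δ / 2) * (4 * (1 - δ) * (K * M ^ 2)) + (1 - δ) * (2 - δ) * δ * (K * M ^ 2)
        = 4 * (1 - δ) * (K * M ^ 2) - δ ^ 2 * ((1 - δ) * (K * M ^ 2)) := by ring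
    rw [key]
    linarith [mul_nonneg (sq_nonneg δ) (mul_nonneg hδ1'.le hKM)]
  -- main induction
  induction t with
  | zero =>
      simp only [he0]
      simp only [norm_zero]
      rw [show (fun (_ : Ω) => (0:ℝ) ^ 2) = fun _ => (0:ℝ) by funext; simp, integral_zero]
      exact hB0
  | succ t ih =>
      by_cases hres : (t + 1) % ⌊1 / δ⌋₊ = 0
      · have := hreset t hres
        simp only [this, norm_zero]
        rw [show (fun (_ : Ω) => (0:ℝ) ^ 2) = fun _ => (0:ℝ) by funext; simp, integral_zero]
        exact hB0
      · have h1 := hcontr_e t hres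
        have h2 := hvbound t
        have h3 : (1 - δ) * ∫ ω, ‖v t ω‖ ^ 2 ∂μ
            ≤ (1 - δ) * ((1 + β) * ∫ ω, ‖e t ω‖ ^ 2 ∂μ + (1 + β⁻¹) * (K * M ^ 2 / (N:ℝ))) :=
          mul_le_mul_of_nonneg_left h2 hδ1'.le
        have h4 : (1 - δ) * ((1 + β) * ∫ ω, ‖e t ω‖ ^ 2 ∂μ + (1 + β⁻¹) * (K * M ^ 2 / (N:ℝ)))
            = (1 - δ) * (1 + β) * ∫ ω, ‖e t ω‖ ^ 2 ∂μ
              + (1 - δ) * (1 + β⁻¹) * (K * M ^ 2 / (N:ℝ)) := by ring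
        have h5 : (1 - δ) * (1 + β) * ∫ ω, ‖e t ω‖ ^ 2 ∂μ ≤ (1 - δ/2) * B := by
          rw [hb1]
          apply mul_le_mul_of_nonneg_left ih (by linarith)
        have h6 : (1 - δ) * (1 + β⁻¹) * (K * M ^ 2 / (N:ℝ))
            = ((1 - δ) * (2 - δ) / δ) * (K * M ^ 2 / (N:ℝ)) := by rw [hb2]
        calc ∫ ω, ‖e (t+1) ω‖ ^ 2 ∂μ
            ≤ (1 - δ) * ∫ ω, ‖v t ω‖ ^ 2 ∂μ := h1
          _ ≤ (1 - δ) * (1 + β) * ∫ ω, ‖e t ω‖ ^ 2 ∂μ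
              + (1 - δ) * (1 + β⁻¹) * (K * M ^ 2 / (N:ℝ)) := by rw [← h4]; exact h3
          _ ≤ (1 - δ/2) * B + ((1 - δ) * (2 - δ) / δ) * (K * M ^ 2 / (N:ℝ)) := by
              rw [h6]; linarith
          _ ≤ B := harith
end

section
/- (Lemma 7) In LIEC-SGD under L-Lipschitz gradients and bounded variance σ², the accumulated server error satisfies ∑_{t=0}^{T−1} E‖eₜ‖² ≤ 8(1−δ)(2−δ)Tσ²/δ² + (24(1−δ)(2−δ)L²/(δ²N))∑_{t=0}^{T−1}∑ᵢ E‖xᵗⁱ − x̄ₜ‖² + (24(1−δ)(2−δ)/δ²)∑_{t=0}^{T−1} E‖∇f(x̄ₜ)‖². -/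
open MeasureTheory

lemma liec_int_sq {Ω : Type*} [MeasurableSpace Ω] {μ : Measure Ω}
    {E : Type*} [NormedAddCommGroup E] {f : Ω → E} (hf : MemLp f 2 μ) :
    Integrable (fun ω => ‖f ω‖ ^ 2) μ := by
  have h := hf.integrable_norm_rpow two_ne_zero ENNReal.ofNat_ne_top
  simp only [ENNReal.toReal_ofNat] at h
  have heq : (fun ω => ‖f ω‖ ^ (2:ℕ)) = fun ω => ‖f ω‖ ^ (2:ℝ) := by
    funext ω
    rw [show (2:ℝ) = ((2:ℕ):ℝ) by norm_num, Real.rpow_natCast]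
  rw [heq]; exact h

lemma liec_peter_paul {E : Type*} [SeminormedAddGroup E] (a b : E) {β : ℝ} (hβ : 0 < β) :
    ‖a + b‖ ^ 2 ≤ (1 + β) * ‖a‖ ^ 2 + (1 + 1 / β) * ‖b‖ ^ 2 := by
  have h := norm_add_le a b
  have ha := norm_nonneg a
  have hb := norm_nonneg b
  have hab := norm_nonneg (a + b)
  have hsq : ‖a + b‖ ^ 2 ≤ (‖a‖ + ‖b‖) ^ 2 := by nlinarith
  have h0 : 0 ≤ (β * ‖a‖ - ‖b‖) ^ 2 / β := by positivity
  have h1 : (β * ‖a‖ - ‖b‖) ^ 2 / β = β * ‖a‖ ^ 2 + (1 / β) * ‖b‖ ^ 2 - 2 * ‖a‖ * ‖b‖ := by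
    field_simp; ring
  nlinarith [h1 ▸ h0]

lemma liec_jensen {E : Type*} [SeminormedAddCommGroup E] [NormedSpace ℝ E]
    {N : ℕ} (hN : 0 < N) (f : Fin N → E) :
    ‖(N : ℝ)⁻¹ • ∑ i, f i‖ ^ 2 ≤ (N : ℝ)⁻¹ * ∑ i, ‖f i‖ ^ 2 := by
  have hNpos : (0:ℝ) < N := by exact_mod_cast hN
  have h1 : ‖∑ i, f i‖ ≤ ∑ i, ‖f i‖ := norm_sum_le _ _
  have h2 : (∑ i, ‖f i‖) ^ 2 ≤ (N : ℝ) * ∑ i, ‖f i‖ ^ 2 := by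
    simpa using sq_sum_le_card_mul_sum_sq (s := Finset.univ) (f := fun i => ‖f i‖)
  have h3 : ‖(N : ℝ)⁻¹ • ∑ i, f i‖ ^ 2 = (N:ℝ)⁻¹ ^ 2 * ‖∑ i, f i‖ ^ 2 := by
    rw [norm_smul]; simp [abs_of_nonneg (by positivity : (0:ℝ) ≤ (N:ℝ)⁻¹)]; ring
  rw [h3]
  have h4 : ‖∑ i, f i‖ ^ 2 ≤ (N : ℝ) * ∑ i, ‖f i‖ ^ 2 :=
    le_trans (by nlinarith [norm_nonneg (∑ i, f i)]) h2
  calc (N:ℝ)⁻¹ ^ 2 * ‖∑ i, f i‖ ^ 2 ≤ (N:ℝ)⁻¹ ^ 2 * ((N:ℝ) * ∑ i, ‖f i‖ ^ 2) := by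
        apply mul_le_mul_of_nonneg_left h4 (by positivity)
    _ = (N : ℝ)⁻¹ * ∑ i, ‖f i‖ ^ 2 := by field_simp

set_option maxHeartbeats 2000000 in
/-- (Lemma 7) In LIEC-SGD under `L`-Lipschitz gradients and stochastic-gradient variance
bounded by `σ²`, the accumulated server error satisfies
`∑_{t<T} E‖e t‖² ≤ 8(1−δ)(2−δ)Tσ²/δ²
  + (24(1−δ)(2−δ)L²/(δ²N)) ∑_{t<T} ∑ i E‖x t i − x̄ t‖²
  + (24(1−δ)(2−δ)/δ²) ∑_{t<T} E‖∇f(x̄ t)‖²`.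
The server error satisfies `e (t+1) = v t − C(v t)` where `C` is a `δ`-contraction and
`v t = e t + (1/N)∑ i q t i` with `q t i = C(g t i)`; `e` is reset to `0` every `⌊1/δ⌋`
iterations; the stochastic gradients satisfy the second-moment bound of Lemma 4
(hypothesis `hlem4`). -/
theorem liec_accumulated_server_error_bound (d N T : ℕ) (hN : 0 < N) (hT : 0 < T)
    (δ L σ : ℝ) (hδ0 : 0 < δ) (hδ1 : δ < 1) (hL : 0 < L) (hσ : 0 ≤ σ)
    {Ω : Type*} [MeasurableSpace Ω] (μ : Measure Ω) [IsProbabilityMeasure μ]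
    (gF : EuclideanSpace ℝ (Fin d) → EuclideanSpace ℝ (Fin d))
    (x g q : ℕ → Fin N → Ω → EuclideanSpace ℝ (Fin d))
    (e v : ℕ → Ω → EuclideanSpace ℝ (Fin d))
    (hL2g : ∀ t i, MemLp (g t i) 2 μ) (hL2q : ∀ t i, MemLp (q t i) 2 μ)
    (hL2x : ∀ t i, MemLp (x t i) 2 μ) (hL2e : ∀ t, MemLp (e t) 2 μ)
    (hL2gF : ∀ t, MemLp (fun ω => gF ((N : ℝ)⁻¹ • ∑ j, x t j ω)) 2 μ)
    (he0 : ∀ ω, e 0 ω = 0)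
    (hv : ∀ t ω, v t ω = e t ω + (N : ℝ)⁻¹ • ∑ i, q t i ω)
    (hreset : ∀ t, (t + 1) % ⌊1 / δ⌋₊ = 0 → ∀ ω, e (t + 1) ω = 0)
    (hcontr_e : ∀ t, (t + 1) % ⌊1 / δ⌋₊ ≠ 0 →
      ∫ ω, ‖e (t + 1) ω‖ ^ 2 ∂μ ≤ (1 - δ) * ∫ ω, ‖v t ω‖ ^ 2 ∂μ)
    (hcontr_q : ∀ t i,
      ∫ ω, ‖g t i ω - q t i ω‖ ^ 2 ∂μ ≤ (1 - δ) * ∫ ω, ‖g t i ω‖ ^ 2 ∂μ)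
    (hlem4 : ∀ t (i : Fin N),
      ∫ ω, ‖g t i ω‖ ^ 2 ∂μ
        ≤ σ ^ 2 + 3 * L ^ 2 * ∫ ω, ‖((N : ℝ)⁻¹ • ∑ j, x t j ω) - x t i ω‖ ^ 2 ∂μ
          + 3 * ∫ ω, ‖gF ((N : ℝ)⁻¹ • ∑ j, x t j ω)‖ ^ 2 ∂μ) :
    ∑ t ∈ Finset.range T, ∫ ω, ‖e t ω‖ ^ 2 ∂μ
      ≤ 8 * (1 - δ) * (2 - δ) * T * σ ^ 2 / δ ^ 2
        + 24 * (1 - δ) * (2 - δ) * L ^ 2 / (δ ^ 2 * N) * ∑ t ∈ Finset.range T, ∑ i,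
            ∫ ω, ‖x t i ω - ((N : ℝ)⁻¹ • ∑ j, x t j ω)‖ ^ 2 ∂μ
        + 24 * (1 - δ) * (2 - δ) / δ ^ 2 * ∑ t ∈ Finset.range T,
            ∫ ω, ‖gF ((N : ℝ)⁻¹ • ∑ j, x t j ω)‖ ^ 2 ∂μ := by
  have hNpos : (0:ℝ) < N := by exact_mod_cast hN
  have hδne : δ ≠ 0 := ne_of_gt hδ0
  have hNne : (N:ℝ) ≠ 0 := ne_of_gt hNpos
  have h1δ : (0:ℝ) < 1 - δ := by linarith
  have h1δne : (1:ℝ) - δ ≠ 0 := ne_of_gt h1δ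
  have h2δ : (0:ℝ) < 2 - δ := by linarith
  have hδ2 : (0:ℝ) < δ ^ 2 := by positivity
  -- reverse the subtraction in the goal to match Lemma 4's form
  have hDrev : ∀ t (i : Fin N),
      (∫ ω, ‖x t i ω - ((N : ℝ)⁻¹ • ∑ j, x t j ω)‖ ^ 2 ∂μ)
        = ∫ ω, ‖((N : ℝ)⁻¹ • ∑ j, x t j ω) - x t i ω‖ ^ 2 ∂μ := by
    intro t i
    congr 1; funext ω; rw [norm_sub_rev]
  simp only [hDrev]
  -- abbreviations
  set Et : ℕ → ℝ := fun t => ∫ ω, ‖e t ω‖ ^ 2 ∂μ with hEt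
  set Dt : ℕ → Fin N → ℝ :=
    fun t i => ∫ ω, ‖((N : ℝ)⁻¹ • ∑ j, x t j ω) - x t i ω‖ ^ 2 ∂μ with hDt
  set Gt : ℕ → ℝ := fun t => ∫ ω, ‖gF ((N : ℝ)⁻¹ • ∑ j, x t j ω)‖ ^ 2 ∂μ with hGt
  set St : ℕ → ℝ := fun t => σ ^ 2 + 3 * L ^ 2 * ((N:ℝ)⁻¹ * ∑ i, Dt t i) + 3 * Gt t with hSt
  set β : ℝ := δ / (2 * (1 - δ)) with hβ
  set K : ℝ := 2 * (1 - δ) * (2 - δ) ^ 2 / δ with hK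
  have hβpos : 0 < β := by rw [hβ]; positivity
  have hKpos : 0 < K := by rw [hK]; positivity
  -- integrability
  have hIe : ∀ t, Integrable (fun ω => ‖e t ω‖ ^ 2) μ := fun t => liec_int_sq (hL2e t)
  have hIg : ∀ t i, Integrable (fun ω => ‖g t i ω‖ ^ 2) μ := fun t i => liec_int_sq (hL2g t i)
  have hIq : ∀ t i, Integrable (fun ω => ‖q t i ω‖ ^ 2) μ := fun t i => liec_int_sq (hL2q t i)
  have hIgq : ∀ t i, Integrable (fun ω => ‖g t i ω - q t i ω‖ ^ 2) μ :=
    fun t i => liec_int_sq ((hL2g t i).sub (hL2q t i))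
  -- nonnegativity
  have hEnn : ∀ t, 0 ≤ Et t := fun t => integral_nonneg (fun ω => by positivity)
  have hDnn : ∀ t i, 0 ≤ Dt t i := fun t i => integral_nonneg (fun ω => by positivity)
  have hGnn : ∀ t, 0 ≤ Gt t := fun t => integral_nonneg (fun ω => by positivity)
  have hgnn : ∀ t i, 0 ≤ ∫ ω, ‖g t i ω‖ ^ 2 ∂μ := fun t i => integral_nonneg (fun ω => by positivity)
  have hSnn : ∀ t, 0 ≤ St t := by
    intro t
    have h1 : 0 ≤ ∑ i, Dt t i := Finset.sum_nonneg fun i _ => hDnn t i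
    have h2 := hGnn t
    rw [hSt]
    dsimp only
    have h3 : 0 ≤ 3 * L ^ 2 * ((N:ℝ)⁻¹ * ∑ i, Dt t i) :=
      mul_nonneg (by positivity) (mul_nonneg (by positivity) h1)
    nlinarith [sq_nonneg σ]
  -- bound on compressed gradients
  have hq : ∀ t i, ∫ ω, ‖q t i ω‖ ^ 2 ∂μ ≤ 2 * (2 - δ) * ∫ ω, ‖g t i ω‖ ^ 2 ∂μ := by
    intro t i
    have hpt : ∀ ω, ‖q t i ω‖ ^ 2 ≤ 2 * ‖g t i ω - q t i ω‖ ^ 2 + 2 * ‖g t i ω‖ ^ 2 := by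
      intro ω
      have h : ‖q t i ω‖ ≤ ‖g t i ω - q t i ω‖ + ‖g t i ω‖ := by
        have h' := norm_sub_le (g t i ω) (g t i ω - q t i ω)
        simpa [sub_sub_cancel, add_comm] using h'
      nlinarith [norm_nonneg (q t i ω), norm_nonneg (g t i ω - q t i ω), norm_nonneg (g t i ω),
        sq_nonneg (‖g t i ω - q t i ω‖ - ‖g t i ω‖)]
    have hint : Integrable (fun ω => 2 * ‖g t i ω - q t i ω‖ ^ 2 + 2 * ‖g t i ω‖ ^ 2) μ :=
      ((hIgq t i).const_mul 2).add ((hIg t i).const_mul 2)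
    calc ∫ ω, ‖q t i ω‖ ^ 2 ∂μ
        ≤ ∫ ω, (2 * ‖g t i ω - q t i ω‖ ^ 2 + 2 * ‖g t i ω‖ ^ 2) ∂μ :=
          integral_mono_of_nonneg (ae_of_all _ fun ω => by positivity) hint (ae_of_all _ hpt)
      _ = 2 * (∫ ω, ‖g t i ω - q t i ω‖ ^ 2 ∂μ) + 2 * ∫ ω, ‖g t i ω‖ ^ 2 ∂μ := by
          rw [integral_add ((hIgq t i).const_mul 2) ((hIg t i).const_mul 2),
            integral_const_mul, integral_const_mul]
      _ ≤ 2 * ((1 - δ) * ∫ ω, ‖g t i ω‖ ^ 2 ∂μ) + 2 * ∫ ω, ‖g t i ω‖ ^ 2 ∂μ := by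
          linarith [hcontr_q t i]
      _ = 2 * (2 - δ) * ∫ ω, ‖g t i ω‖ ^ 2 ∂μ := by ring
  -- bound on ‖v‖²
  have hv2 : ∀ t, ∫ ω, ‖v t ω‖ ^ 2 ∂μ
      ≤ (1 + β) * Et t + ((1 + 1/β) * (N:ℝ)⁻¹) * ∑ i, ∫ ω, ‖q t i ω‖ ^ 2 ∂μ := by
    intro t
    have hpt : ∀ ω, ‖v t ω‖ ^ 2
        ≤ (1 + β) * ‖e t ω‖ ^ 2 + ((1 + 1/β) * (N:ℝ)⁻¹) * ∑ i, ‖q t i ω‖ ^ 2 := by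
      intro ω
      rw [hv t ω, mul_assoc]
      have h1 := liec_peter_paul (e t ω) ((N:ℝ)⁻¹ • ∑ i, q t i ω) hβpos
      have h2 := liec_jensen hN (fun i => q t i ω)
      have h1β : (0:ℝ) ≤ 1 + 1/β := by positivity
      have h3 := mul_le_mul_of_nonneg_left h2 h1β
      calc ‖e t ω + (N:ℝ)⁻¹ • ∑ i, q t i ω‖ ^ 2
          ≤ (1 + β) * ‖e t ω‖ ^ 2 + (1 + 1/β) * ‖(N:ℝ)⁻¹ • ∑ i, q t i ω‖ ^ 2 := h1
        _ ≤ (1 + β) * ‖e t ω‖ ^ 2 + (1 + 1/β) * ((N:ℝ)⁻¹ * ∑ i, ‖q t i ω‖ ^ 2) := by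
            linarith [h3]
    have hisum : Integrable (fun ω => ∑ i, ‖q t i ω‖ ^ 2) μ :=
      integrable_finset_sum _ (fun i _ => hIq t i)
    have hi1 : Integrable (fun ω => (1 + β) * ‖e t ω‖ ^ 2) μ := (hIe t).const_mul _
    have hi2 : Integrable (fun ω => ((1 + 1/β) * (N:ℝ)⁻¹) * ∑ i, ‖q t i ω‖ ^ 2) μ :=
      hisum.const_mul _
    calc ∫ ω, ‖v t ω‖ ^ 2 ∂μ
        ≤ ∫ ω, ((1 + β) * ‖e t ω‖ ^ 2 + ((1 + 1/β) * (N:ℝ)⁻¹) * ∑ i, ‖q t i ω‖ ^ 2) ∂μ := by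
          refine integral_mono_of_nonneg (ae_of_all _ fun ω => by positivity) (hi1.add hi2)
            (ae_of_all _ hpt)
      _ = (1 + β) * Et t + ((1 + 1/β) * (N:ℝ)⁻¹) * ∑ i, ∫ ω, ‖q t i ω‖ ^ 2 ∂μ := by
          rw [integral_add hi1 hi2, integral_const_mul, integral_const_mul,
            integral_finset_sum _ (fun i _ => hIq t i)]
  -- Lemma 4 summed over i
  have hg4 : ∀ t, ∑ i, ∫ ω, ‖g t i ω‖ ^ 2 ∂μ ≤ (N:ℝ) * St t := by
    intro t
    calc ∑ i, ∫ ω, ‖g t i ω‖ ^ 2 ∂μ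
        ≤ ∑ i : Fin N, (σ ^ 2 + 3 * L ^ 2 * Dt t i + 3 * Gt t) :=
          Finset.sum_le_sum fun i _ => hlem4 t i
      _ = (N:ℝ) * σ ^ 2 + 3 * L ^ 2 * ∑ i, Dt t i + 3 * (N:ℝ) * Gt t := by
          rw [Finset.sum_add_distrib, Finset.sum_add_distrib, Finset.sum_const,
            Finset.sum_const, Finset.card_univ, Fintype.card_fin, ← Finset.mul_sum,
            nsmul_eq_mul, nsmul_eq_mul]
          ring
      _ = (N:ℝ) * St t := by
          rw [hSt]; dsimp only; field_simp
  -- key recursion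
  have hkey : ∀ t, Et (t + 1) ≤ (1 - δ/2) * Et t + K * St t := by
    intro t
    by_cases hr : (t + 1) % ⌊1 / δ⌋₊ = 0
    · have h0 : Et (t + 1) = 0 := by
        rw [hEt]; dsimp only; simp [hreset t hr]
      rw [h0]
      exact add_nonneg (mul_nonneg (by linarith : (0:ℝ) ≤ 1 - δ/2) (hEnn t))
        (mul_nonneg (le_of_lt hKpos) (hSnn t))
    · have hsumq : ∑ i, ∫ ω, ‖q t i ω‖ ^ 2 ∂μ ≤ 2 * (2 - δ) * ((N:ℝ) * St t) := by
        calc ∑ i, ∫ ω, ‖q t i ω‖ ^ 2 ∂μ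
            ≤ ∑ i, 2 * (2 - δ) * ∫ ω, ‖g t i ω‖ ^ 2 ∂μ := Finset.sum_le_sum fun i _ => hq t i
          _ = 2 * (2 - δ) * ∑ i, ∫ ω, ‖g t i ω‖ ^ 2 ∂μ := by rw [← Finset.mul_sum]
          _ ≤ 2 * (2 - δ) * ((N:ℝ) * St t) := by
              apply mul_le_mul_of_nonneg_left (hg4 t) (by linarith)
      calc Et (t + 1) ≤ (1 - δ) * ∫ ω, ‖v t ω‖ ^ 2 ∂μ := hcontr_e t hr
        _ ≤ (1 - δ) * ((1 + β) * Et t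
              + ((1 + 1/β) * (N:ℝ)⁻¹) * ∑ i, ∫ ω, ‖q t i ω‖ ^ 2 ∂μ) :=
            mul_le_mul_of_nonneg_left (hv2 t) (le_of_lt h1δ)
        _ ≤ (1 - δ) * ((1 + β) * Et t
              + ((1 + 1/β) * (N:ℝ)⁻¹) * (2 * (2 - δ) * ((N:ℝ) * St t))) := by
            apply mul_le_mul_of_nonneg_left _ (le_of_lt h1δ)
            have hcnn : (0:ℝ) ≤ (1 + 1/β) * (N:ℝ)⁻¹ := by positivity
            have := mul_le_mul_of_nonneg_left hsumq hcnn
            linarith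
        _ = (1 - δ/2) * Et t + K * St t := by
            rw [hβ, hK]
            field_simp
            ring
  -- sum up
  have hE0 : Et 0 = 0 := by
    rw [hEt]; dsimp only; simp [he0]
  obtain ⟨n, rfl⟩ : ∃ n, T = n + 1 := ⟨T - 1, (Nat.succ_pred_eq_of_pos hT).symm⟩
  have hfin : ∑ t ∈ Finset.range (n + 1), Et t
      ≤ (2/δ) * K * ∑ t ∈ Finset.range (n + 1), St t := by
    have hA : ∑ t ∈ Finset.range (n + 1), Et t
        = (∑ t ∈ Finset.range n, Et (t + 1)) + Et 0 := Finset.sum_range_succ' Et n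
    have hstep : ∑ t ∈ Finset.range n, Et (t + 1)
        ≤ (1 - δ/2) * ∑ t ∈ Finset.range n, Et t + K * ∑ t ∈ Finset.range n, St t := by
      rw [Finset.mul_sum, Finset.mul_sum, ← Finset.sum_add_distrib]
      exact Finset.sum_le_sum fun t _ => hkey t
    have hmE : ∑ t ∈ Finset.range n, Et t ≤ ∑ t ∈ Finset.range (n + 1), Et t := by
      rw [Finset.sum_range_succ]; linarith [hEnn n]
    have hmS : ∑ t ∈ Finset.range n, St t ≤ ∑ t ∈ Finset.range (n + 1), St t := by
      rw [Finset.sum_range_succ]; linarith [hSnn n]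
    have h5 : ∑ t ∈ Finset.range (n + 1), Et t
        ≤ (1 - δ/2) * ∑ t ∈ Finset.range (n + 1), Et t
          + K * ∑ t ∈ Finset.range (n + 1), St t := by
      have h6 := mul_le_mul_of_nonneg_left hmE (by linarith : (0:ℝ) ≤ 1 - δ/2)
      have h7 := mul_le_mul_of_nonneg_left hmS (le_of_lt hKpos)
      linarith
    have h8 : δ/2 * ∑ t ∈ Finset.range (n + 1), Et t
        ≤ K * ∑ t ∈ Finset.range (n + 1), St t := by linarith
    calc ∑ t ∈ Finset.range (n + 1), Et t
        = (2/δ) * (δ/2 * ∑ t ∈ Finset.range (n + 1), Et t) := by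
          field_simp
      _ ≤ (2/δ) * (K * ∑ t ∈ Finset.range (n + 1), St t) :=
          mul_le_mul_of_nonneg_left h8 (by positivity)
      _ = (2/δ) * K * ∑ t ∈ Finset.range (n + 1), St t := by ring
  -- coefficient comparison and expansion
  have hSsumnn : 0 ≤ ∑ t ∈ Finset.range (n + 1), St t :=
    Finset.sum_nonneg fun t _ => hSnn t
  have hcoef : (2/δ) * K ≤ 8 * (1 - δ) * (2 - δ) / δ ^ 2 := by
    have hkey2 : 4 * (1 - δ) * (2 - δ) ^ 2 ≤ 8 * (1 - δ) * (2 - δ) := by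
      nlinarith [mul_pos (mul_pos h1δ h2δ) hδ0]
    have heq2 : (2/δ) * K = 4 * (1 - δ) * (2 - δ) ^ 2 / δ ^ 2 := by
      rw [hK]; field_simp; ring
    rw [heq2, div_eq_mul_inv, div_eq_mul_inv]
    exact mul_le_mul_of_nonneg_right hkey2 (by positivity)
  have hSexp : ∑ t ∈ Finset.range (n + 1), St t
      = (n + 1 : ℕ) * σ ^ 2
        + 3 * L ^ 2 * (N:ℝ)⁻¹ * (∑ t ∈ Finset.range (n + 1), ∑ i, Dt t i)
        + 3 * ∑ t ∈ Finset.range (n + 1), Gt t := by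
    rw [hSt]
    dsimp only
    rw [Finset.sum_add_distrib, Finset.sum_add_distrib, Finset.sum_const,
      Finset.card_range, ← Finset.mul_sum, ← Finset.mul_sum, ← Finset.mul_sum,
      nsmul_eq_mul]
    ring
  calc ∑ t ∈ Finset.range (n + 1), Et t
      ≤ (2/δ) * K * ∑ t ∈ Finset.range (n + 1), St t := hfin
    _ ≤ (8 * (1 - δ) * (2 - δ) / δ ^ 2) * ∑ t ∈ Finset.range (n + 1), St t :=
        mul_le_mul_of_nonneg_right hcoef hSsumnn
    _ = 8 * (1 - δ) * (2 - δ) * (n + 1 : ℕ) * σ ^ 2 / δ ^ 2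
        + 24 * (1 - δ) * (2 - δ) * L ^ 2 / (δ ^ 2 * N)
            * ∑ t ∈ Finset.range (n + 1), ∑ i, Dt t i
        + 24 * (1 - δ) * (2 - δ) / δ ^ 2 * ∑ t ∈ Finset.range (n + 1), Gt t := by
        rw [hSexp]
        field_simp
        ring
end

section
/- For f with L-Lipschitz gradient and any vectors x̂ₜ, x̄ₜ, g ∈ ℝᵈ, one descent step x̂ₜ₊₁ = x̂ₜ − ηg (in expectation, with E[g] = (1/N)∑ᵢ∇fᵢ(xᵗⁱ)) satisfies E[f(x̂ₜ₊₁)] ≤ E[f(x̂ₜ)] − (η/2)E‖∇f(x̄ₜ)‖² + (ηL²/2)E‖x̂ₜ − x̄ₜ‖² + (ηL²/(2N))∑ᵢ E‖x̄ₜ − xᵗⁱ‖² + (η²L/2)E‖g‖². -/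
open MeasureTheory

section helpers
lemma descent_aux {E : Type*} [NormedAddCommGroup E] [InnerProductSpace ℝ E] [CompleteSpace E]
    {f : E → ℝ} {gf : E → E} {L : ℝ}
    (hgrad : ∀ y, HasGradientAt f (gf y) y)
    (hlip : ∀ y z, ‖gf y - gf z‖ ≤ L * ‖y - z‖) (x v : E) :
    f (x + v) ≤ f x + (inner ℝ (gf x) v : ℝ) + L / 2 * ‖v‖ ^ 2 := by
  set ψ : ℝ → ℝ := fun t => f (x + t • v) - t * (inner ℝ (gf x) v : ℝ) - L / 2 * t ^ 2 * ‖v‖ ^ 2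
    with hψ
  have hder : ∀ t : ℝ, HasDerivAt ψ
      ((inner ℝ (gf (x + t • v)) v : ℝ) - (inner ℝ (gf x) v : ℝ) - L * t * ‖v‖ ^ 2) t := by
    intro t
    have hline : HasDerivAt (fun t : ℝ => x + t • v) v t := by
      simpa using (((hasDerivAt_id t).smul_const v).const_add x)
    have h1 : HasDerivAt (fun t : ℝ => f (x + t • v)) ((inner ℝ (gf (x + t • v)) v : ℝ)) t := by
      have := (hgrad (x + t • v)).hasFDerivAt.comp_hasDerivAt t hline
      simp only [InnerProductSpace.toDual_apply_apply] at this
      exact this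
    have h2 : HasDerivAt (fun t : ℝ => t * (inner ℝ (gf x) v : ℝ)) ((inner ℝ (gf x) v : ℝ)) t := by
      simpa using (hasDerivAt_id t).mul_const (inner ℝ (gf x) v : ℝ)
    have h3 : HasDerivAt (fun t : ℝ => L / 2 * t ^ 2 * ‖v‖ ^ 2) (L * t * ‖v‖ ^ 2) t := by
      have := ((hasDerivAt_pow 2 t).const_mul (L / 2)).mul_const (‖v‖ ^ 2)
      refine this.congr_deriv ?_
      ring
    exact (h1.sub h2).sub h3
  have hcont : Continuous ψ := by
    have : Differentiable ℝ ψ := fun t => (hder t).differentiableAt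
    exact this.continuous
  have hanti : AntitoneOn ψ (Set.Icc (0:ℝ) 1) := by
    apply antitoneOn_of_deriv_nonpos (convex_Icc 0 1) hcont.continuousOn
    · intro t ht
      exact ((hder t).differentiableAt).differentiableWithinAt
    · intro t ht
      rw [interior_Icc] at ht
      rw [(hder t).deriv]
      have hb : (inner ℝ (gf (x + t • v)) v : ℝ) - (inner ℝ (gf x) v : ℝ)
          ≤ L * t * ‖v‖ ^ 2 := by
        have h1 : (inner ℝ (gf (x + t • v)) v : ℝ) - (inner ℝ (gf x) v : ℝ)
            = (inner ℝ (gf (x + t • v) - gf x) v : ℝ) := by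
          rw [inner_sub_left]
        rw [h1]
        calc (inner ℝ (gf (x + t • v) - gf x) v : ℝ)
            ≤ ‖gf (x + t • v) - gf x‖ * ‖v‖ := real_inner_le_norm _ _
          _ ≤ (L * ‖(x + t • v) - x‖) * ‖v‖ := by
              gcongr
              exact hlip _ _
          _ = L * t * ‖v‖ ^ 2 := by
              have : (x + t • v) - x = t • v := by abel
              rw [this, norm_smul, Real.norm_eq_abs, abs_of_pos ht.1]
              ring
      linarith
  have := hanti (Set.left_mem_Icc.2 zero_le_one) (Set.right_mem_Icc.2 zero_le_one) zero_le_one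
  simp only [hψ, one_smul, one_pow, zero_smul, add_zero, zero_mul, mul_zero,
    zero_pow, sub_zero, one_mul] at this
  linarith

lemma integrable_inner_of_L2 {Ω : Type*} [MeasurableSpace Ω] {μ : Measure Ω}
    {E : Type*} [NormedAddCommGroup E] [InnerProductSpace ℝ E]
    {f g : Ω → E} (hf : MemLp f 2 μ) (hg : MemLp g 2 μ) :
    Integrable (fun ω => (inner ℝ (f ω) (g ω) : ℝ)) μ := by
  have hfi : Integrable (fun ω => ‖f ω‖ ^ 2) μ := (memLp_two_iff_integrable_sq_norm hf.1).1 hf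
  have hgi : Integrable (fun ω => ‖g ω‖ ^ 2) μ := (memLp_two_iff_integrable_sq_norm hg.1).1 hg
  refine Integrable.mono' ((hfi.add hgi).const_mul (1/2)) (hf.1.inner hg.1) ?_
  filter_upwards with ω
  simp only [Pi.add_apply]
  have h1 : ‖(inner ℝ (f ω) (g ω) : ℝ)‖ ≤ ‖f ω‖ * ‖g ω‖ := norm_inner_le_norm _ _
  nlinarith [sq_nonneg (‖f ω‖ - ‖g ω‖), norm_nonneg (f ω), norm_nonneg (g ω)]

lemma inner_lower {E : Type*} [NormedAddCommGroup E] [InnerProductSpace ℝ E] (a b c : E) :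
    1 / 2 * ‖c‖ ^ 2 - 1 / 2 * ‖a - c‖ ^ 2 - 1 / 2 * ‖c - b‖ ^ 2 ≤ (inner ℝ a b : ℝ) := by
  have h1 := norm_sub_sq_real c b
  have h2 := norm_add_sq_real (a - c) b
  have h3 : (inner ℝ (a - c) b : ℝ) = inner ℝ a b - inner ℝ c b := inner_sub_left _ _ _
  nlinarith [sq_nonneg ‖a - c + b‖]
end helpers

set_option maxHeartbeats 1000000 in
/-- One descent step of the virtual sequence: for `f = (1/N)∑ i f i` with each `f i`
having `L`-Lipschitz gradient `gf i`, and a stochastic direction `g` whose expectation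
is `(1/N)∑ i ∇f i (xt i)` (hypothesis `hunb`, stated as the inner-product identity
against `∇f(x̂)` actually used), the step `x̂' = x̂ − η • g` satisfies
`E[f(x̂')] ≤ E[f(x̂)] − (η/2)E‖∇f(x̄)‖² + (ηL²/2)E‖x̂ − x̄‖²
  + (ηL²/(2N))∑ i E‖x̄ − xt i‖² + (η²L/2)E‖g‖²`. -/
theorem liec_descent_step (d N : ℕ) (hN : 0 < N) (η L : ℝ) (hη : 0 < η) (hL : 0 < L)
    {Ω : Type*} [MeasurableSpace Ω] (μ : Measure Ω) [IsProbabilityMeasure μ]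
    (f : Fin N → EuclideanSpace ℝ (Fin d) → ℝ)
    (gf : Fin N → EuclideanSpace ℝ (Fin d) → EuclideanSpace ℝ (Fin d))
    (hgrad : ∀ i y, HasGradientAt (f i) (gf i y) y)
    (hlip : ∀ i y z, ‖gf i y - gf i z‖ ≤ L * ‖y - z‖)
    (xhat xbar : Ω → EuclideanSpace ℝ (Fin d))
    (xt : Fin N → Ω → EuclideanSpace ℝ (Fin d))
    (g : Ω → EuclideanSpace ℝ (Fin d))
    (hg2 : MemLp g 2 μ) (hxhat2 : MemLp xhat 2 μ) (hxbar2 : MemLp xbar 2 μ)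
    (hxt2 : ∀ i, MemLp (xt i) 2 μ)
    (hgf2 : ∀ i, MemLp (fun ω => gf i (xt i ω)) 2 μ)
    (hgFhat2 : MemLp (fun ω => (N : ℝ)⁻¹ • ∑ i, gf i (xhat ω)) 2 μ)
    (hgFbar2 : MemLp (fun ω => (N : ℝ)⁻¹ • ∑ i, gf i (xbar ω)) 2 μ)
    (hfint : Integrable (fun ω => (N : ℝ)⁻¹ * ∑ i, f i (xhat ω)) μ)
    (hfint' : Integrable (fun ω => (N : ℝ)⁻¹ * ∑ i, f i (xhat ω - η • g ω)) μ)
    (hunb : ∫ ω, (inner ℝ ((N : ℝ)⁻¹ • ∑ i, gf i (xhat ω)) (g ω) : ℝ) ∂μ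
      = ∫ ω, (inner ℝ ((N : ℝ)⁻¹ • ∑ i, gf i (xhat ω))
          ((N : ℝ)⁻¹ • ∑ i, gf i (xt i ω)) : ℝ) ∂μ) :
    ∫ ω, (N : ℝ)⁻¹ * ∑ i, f i (xhat ω - η • g ω) ∂μ
      ≤ ∫ ω, (N : ℝ)⁻¹ * ∑ i, f i (xhat ω) ∂μ
        - η / 2 * ∫ ω, ‖(N : ℝ)⁻¹ • ∑ i, gf i (xbar ω)‖ ^ 2 ∂μ
        + η * L ^ 2 / 2 * ∫ ω, ‖xhat ω - xbar ω‖ ^ 2 ∂μ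
        + η * L ^ 2 / (2 * N) * ∑ i, ∫ ω, ‖xbar ω - xt i ω‖ ^ 2 ∂μ
        + η ^ 2 * L / 2 * ∫ ω, ‖g ω‖ ^ 2 ∂μ := by
  have hNR : (0 : ℝ) < N := by exact_mod_cast hN
  -- ℒ² membership of the averaged stochastic gradient
  have hgbar2 : MemLp (fun ω => (N : ℝ)⁻¹ • ∑ i, gf i (xt i ω)) 2 μ := by
    have hs : MemLp (fun ω => ∑ i, gf i (xt i ω)) 2 μ :=
      memLp_finset_sum Finset.univ (fun i _ => hgf2 i)
    exact hs.const_smul ((N : ℝ)⁻¹)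
  -- integrabilities
  have intA : Integrable (fun ω => (inner ℝ ((N : ℝ)⁻¹ • ∑ i, gf i (xhat ω)) (g ω) : ℝ)) μ :=
    integrable_inner_of_L2 hgFhat2 hg2
  have intB : Integrable (fun ω =>
      (inner ℝ ((N : ℝ)⁻¹ • ∑ i, gf i (xhat ω)) ((N : ℝ)⁻¹ • ∑ i, gf i (xt i ω)) : ℝ)) μ :=
    integrable_inner_of_L2 hgFhat2 hgbar2
  have intg2 : Integrable (fun ω => ‖g ω‖ ^ 2) μ :=
    (memLp_two_iff_integrable_sq_norm hg2.1).1 hg2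
  have intGbar2 : Integrable (fun ω => ‖(N : ℝ)⁻¹ • ∑ i, gf i (xbar ω)‖ ^ 2) μ :=
    (memLp_two_iff_integrable_sq_norm hgFbar2.1).1 hgFbar2
  have intd2 : Integrable (fun ω => ‖xhat ω - xbar ω‖ ^ 2) μ := by
    have h := hxhat2.sub hxbar2
    simpa [Pi.sub_apply] using (memLp_two_iff_integrable_sq_norm h.1).1 h
  have inte2 : ∀ i, Integrable (fun ω => ‖xbar ω - xt i ω‖ ^ 2) μ := by
    intro i
    have h := hxbar2.sub (hxt2 i)
    simpa [Pi.sub_apply] using (memLp_two_iff_integrable_sq_norm h.1).1 h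
  -- pointwise descent
  have hdesc : ∀ ω : Ω,
      (N : ℝ)⁻¹ * ∑ i, f i (xhat ω - η • g ω)
        ≤ ((N : ℝ)⁻¹ * ∑ i, f i (xhat ω)
            - η * (inner ℝ ((N : ℝ)⁻¹ • ∑ i, gf i (xhat ω)) (g ω) : ℝ))
          + η ^ 2 * L / 2 * ‖g ω‖ ^ 2 := by
    intro ω
    have key : ∀ i : Fin N, f i (xhat ω - η • g ω)
        ≤ f i (xhat ω) + (inner ℝ (gf i (xhat ω)) (-(η • g ω)) : ℝ)
          + L / 2 * ‖-(η • g ω)‖ ^ 2 := by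
      intro i
      have := descent_aux (hgrad i) (hlip i) (xhat ω) (-(η • g ω))
      simpa [sub_eq_add_neg] using this
    have hsum : ∑ i, f i (xhat ω - η • g ω)
        ≤ ∑ i, (f i (xhat ω) + (inner ℝ (gf i (xhat ω)) (-(η • g ω)) : ℝ)
            + L / 2 * ‖-(η • g ω)‖ ^ 2) :=
      Finset.sum_le_sum fun i _ => key i
    have hmul := mul_le_mul_of_nonneg_left hsum (inv_nonneg.2 hNR.le)
    have hinner : (inner ℝ ((N : ℝ)⁻¹ • ∑ i, gf i (xhat ω)) (g ω) : ℝ)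
        = (N : ℝ)⁻¹ * ∑ i, (inner ℝ (gf i (xhat ω)) (g ω) : ℝ) := by
      rw [real_inner_smul_left, sum_inner]
    have hnrm : ‖-(η • g ω)‖ ^ 2 = η ^ 2 * ‖g ω‖ ^ 2 := by
      rw [norm_neg, norm_smul, Real.norm_eq_abs, mul_pow, sq_abs]
    have hneg : ∀ i : Fin N, (inner ℝ (gf i (xhat ω)) (-(η • g ω)) : ℝ)
        = -(η * (inner ℝ (gf i (xhat ω)) (g ω) : ℝ)) := by
      intro i
      rw [inner_neg_right, real_inner_smul_right]
    calc (N : ℝ)⁻¹ * ∑ i, f i (xhat ω - η • g ω)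
        ≤ (N : ℝ)⁻¹ * ∑ i, (f i (xhat ω) + (inner ℝ (gf i (xhat ω)) (-(η • g ω)) : ℝ)
            + L / 2 * ‖-(η • g ω)‖ ^ 2) := hmul
      _ = ((N : ℝ)⁻¹ * ∑ i, f i (xhat ω)
            - η * (inner ℝ ((N : ℝ)⁻¹ • ∑ i, gf i (xhat ω)) (g ω) : ℝ))
          + η ^ 2 * L / 2 * ‖g ω‖ ^ 2 := by
          simp only [Finset.sum_add_distrib, hneg, hnrm, Finset.sum_neg_distrib,
            Finset.sum_const, Finset.card_univ, Fintype.card_fin, nsmul_eq_mul,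
            hinner, ← Finset.mul_sum]
          field_simp
          ring
  -- integrate the descent inequality
  have I1 : ∫ ω, (N : ℝ)⁻¹ * ∑ i, f i (xhat ω - η • g ω) ∂μ
      ≤ ∫ ω, (((N : ℝ)⁻¹ * ∑ i, f i (xhat ω)
          - η * (inner ℝ ((N : ℝ)⁻¹ • ∑ i, gf i (xhat ω)) (g ω) : ℝ))
          + η ^ 2 * L / 2 * ‖g ω‖ ^ 2) ∂μ :=
    integral_mono hfint' ((hfint.sub (intA.const_mul η)).add (intg2.const_mul _)) hdesc
  have int1 : Integrable (fun ω => (N : ℝ)⁻¹ * ∑ i, f i (xhat ω)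
      - η * (inner ℝ ((N : ℝ)⁻¹ • ∑ i, gf i (xhat ω)) (g ω) : ℝ)) μ :=
    hfint.sub (intA.const_mul η)
  have I1' : ∫ ω, (((N : ℝ)⁻¹ * ∑ i, f i (xhat ω)
          - η * (inner ℝ ((N : ℝ)⁻¹ • ∑ i, gf i (xhat ω)) (g ω) : ℝ))
          + η ^ 2 * L / 2 * ‖g ω‖ ^ 2) ∂μ
      = ∫ ω, (N : ℝ)⁻¹ * ∑ i, f i (xhat ω) ∂μ
        - η * ∫ ω, (inner ℝ ((N : ℝ)⁻¹ • ∑ i, gf i (xhat ω)) (g ω) : ℝ) ∂μ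
        + η ^ 2 * L / 2 * ∫ ω, ‖g ω‖ ^ 2 ∂μ := by
    rw [integral_add int1 (intg2.const_mul _),
      integral_sub hfint (intA.const_mul η), integral_const_mul, integral_const_mul, integral_const_mul]
  -- pointwise lower bound on the cross term
  have hB : ∀ ω : Ω,
      (1 / 2 * ‖(N : ℝ)⁻¹ • ∑ i, gf i (xbar ω)‖ ^ 2
        - L ^ 2 / 2 * ‖xhat ω - xbar ω‖ ^ 2)
        - L ^ 2 / (2 * N) * ∑ i, ‖xbar ω - xt i ω‖ ^ 2
      ≤ (inner ℝ ((N : ℝ)⁻¹ • ∑ i, gf i (xhat ω)) ((N : ℝ)⁻¹ • ∑ i, gf i (xt i ω)) : ℝ) := by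
    intro ω
    set a := (N : ℝ)⁻¹ • ∑ i, gf i (xhat ω) with ha
    set b := (N : ℝ)⁻¹ • ∑ i, gf i (xt i ω) with hb
    set c := (N : ℝ)⁻¹ • ∑ i, gf i (xbar ω) with hc
    have hlow := inner_lower a b c
    have hinvpos : (0:ℝ) ≤ (N : ℝ)⁻¹ := inv_nonneg.2 hNR.le
    have hac2 : ‖a - c‖ ^ 2 ≤ L ^ 2 * ‖xhat ω - xbar ω‖ ^ 2 := by
      have hdiff : a - c = (N : ℝ)⁻¹ • ∑ i, (gf i (xhat ω) - gf i (xbar ω)) := by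
        rw [ha, hc, ← smul_sub, ← Finset.sum_sub_distrib]
      have h1 : ‖∑ i, (gf i (xhat ω) - gf i (xbar ω))‖
          ≤ ∑ _i : Fin N, (L * ‖xhat ω - xbar ω‖) :=
        norm_sum_le_of_le _ (fun i _ => hlip i _ _)
      rw [Finset.sum_const, Finset.card_univ, Fintype.card_fin, nsmul_eq_mul] at h1
      have hac : ‖a - c‖ ≤ L * ‖xhat ω - xbar ω‖ := by
        rw [hdiff, norm_smul, Real.norm_eq_abs, abs_of_nonneg hinvpos]
        calc (N : ℝ)⁻¹ * ‖∑ i, (gf i (xhat ω) - gf i (xbar ω))‖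
            ≤ (N : ℝ)⁻¹ * ((N : ℝ) * (L * ‖xhat ω - xbar ω‖)) := by gcongr
          _ = L * ‖xhat ω - xbar ω‖ := by field_simp
      have := pow_le_pow_left₀ (norm_nonneg _) hac 2
      calc ‖a - c‖ ^ 2 ≤ (L * ‖xhat ω - xbar ω‖) ^ 2 := this
        _ = L ^ 2 * ‖xhat ω - xbar ω‖ ^ 2 := by ring
    have hcb2 : ‖c - b‖ ^ 2 ≤ L ^ 2 / N * ∑ i, ‖xbar ω - xt i ω‖ ^ 2 := by
      have hdiff : c - b = (N : ℝ)⁻¹ • ∑ i, (gf i (xbar ω) - gf i (xt i ω)) := by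
        rw [hc, hb, ← smul_sub, ← Finset.sum_sub_distrib]
      have h1 : ‖∑ i, (gf i (xbar ω) - gf i (xt i ω))‖
          ≤ ∑ i, ‖gf i (xbar ω) - gf i (xt i ω)‖ := norm_sum_le _ _
      have h2 : (∑ i, ‖gf i (xbar ω) - gf i (xt i ω)‖) ^ 2
          ≤ (N : ℝ) * ∑ i, ‖gf i (xbar ω) - gf i (xt i ω)‖ ^ 2 := by
        have := sq_sum_le_card_mul_sum_sq
          (s := (Finset.univ : Finset (Fin N)))
          (f := fun i => ‖gf i (xbar ω) - gf i (xt i ω)‖)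
        simpa using this
      have h3 : ∑ i, ‖gf i (xbar ω) - gf i (xt i ω)‖ ^ 2
          ≤ ∑ i, L ^ 2 * ‖xbar ω - xt i ω‖ ^ 2 := by
        refine Finset.sum_le_sum fun i _ => ?_
        have h := hlip i (xbar ω) (xt i ω)
        nlinarith [norm_nonneg (gf i (xbar ω) - gf i (xt i ω)),
          norm_nonneg (xbar ω - xt i ω), hL.le]
      have h4 : ‖∑ i, (gf i (xbar ω) - gf i (xt i ω))‖ ^ 2
          ≤ (N : ℝ) * ∑ i, L ^ 2 * ‖xbar ω - xt i ω‖ ^ 2 := by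
        have h5 : ‖∑ i, (gf i (xbar ω) - gf i (xt i ω))‖ ^ 2
            ≤ (∑ i, ‖gf i (xbar ω) - gf i (xt i ω)‖) ^ 2 :=
          pow_le_pow_left₀ (norm_nonneg _) h1 2
        exact h5.trans (h2.trans (mul_le_mul_of_nonneg_left h3 hNR.le))
      rw [hdiff, norm_smul, Real.norm_eq_abs, abs_of_nonneg hinvpos, mul_pow]
      calc ((N : ℝ)⁻¹) ^ 2 * ‖∑ i, (gf i (xbar ω) - gf i (xt i ω))‖ ^ 2
          ≤ ((N : ℝ)⁻¹) ^ 2 * ((N : ℝ) * ∑ i, L ^ 2 * ‖xbar ω - xt i ω‖ ^ 2) := by gcongr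
        _ = L ^ 2 / N * ∑ i, ‖xbar ω - xt i ω‖ ^ 2 := by
            rw [← Finset.mul_sum]
            field_simp
    have hexp2 : L ^ 2 / (2 * (N:ℝ)) * ∑ i, ‖xbar ω - xt i ω‖ ^ 2
        = 1 / 2 * (L ^ 2 / N * ∑ i, ‖xbar ω - xt i ω‖ ^ 2) := by ring
    rw [hexp2]
    linarith
  -- integrate it
  have intLB : Integrable (fun ω =>
      (1 / 2 * ‖(N : ℝ)⁻¹ • ∑ i, gf i (xbar ω)‖ ^ 2
        - L ^ 2 / 2 * ‖xhat ω - xbar ω‖ ^ 2)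
        - L ^ 2 / (2 * N) * ∑ i, ‖xbar ω - xt i ω‖ ^ 2) μ :=
    ((intGbar2.const_mul _).sub (intd2.const_mul _)).sub
      ((integrable_finset_sum Finset.univ fun i _ => inte2 i).const_mul _)
  have int2 : Integrable (fun ω => 1 / 2 * ‖(N : ℝ)⁻¹ • ∑ i, gf i (xbar ω)‖ ^ 2
      - L ^ 2 / 2 * ‖xhat ω - xbar ω‖ ^ 2) μ :=
    (intGbar2.const_mul _).sub (intd2.const_mul _)
  have int3 : Integrable (fun ω => L ^ 2 / (2 * (N:ℝ)) * ∑ i, ‖xbar ω - xt i ω‖ ^ 2) μ :=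
    (integrable_finset_sum Finset.univ fun i _ => inte2 i).const_mul _
  have I2 : (1 / 2 * ∫ ω, ‖(N : ℝ)⁻¹ • ∑ i, gf i (xbar ω)‖ ^ 2 ∂μ
        - L ^ 2 / 2 * ∫ ω, ‖xhat ω - xbar ω‖ ^ 2 ∂μ)
        - L ^ 2 / (2 * N) * ∑ i, ∫ ω, ‖xbar ω - xt i ω‖ ^ 2 ∂μ
      ≤ ∫ ω, (inner ℝ ((N : ℝ)⁻¹ • ∑ i, gf i (xhat ω))
          ((N : ℝ)⁻¹ • ∑ i, gf i (xt i ω)) : ℝ) ∂μ := by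
    have h := integral_mono intLB intB hB
    rw [integral_sub int2 int3,
      integral_sub (intGbar2.const_mul _) (intd2.const_mul _),
      integral_const_mul, integral_const_mul, integral_const_mul,
      integral_finset_sum Finset.univ (fun i _ => inte2 i)] at h
    exact h
  -- combine
  set C := ∫ ω, ‖(N : ℝ)⁻¹ • ∑ i, gf i (xbar ω)‖ ^ 2 ∂μ
  set D := ∫ ω, ‖xhat ω - xbar ω‖ ^ 2 ∂μ
  set S := ∑ i, ∫ ω, ‖xbar ω - xt i ω‖ ^ 2 ∂μ
  set G := ∫ ω, ‖g ω‖ ^ 2 ∂μ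
  set B := ∫ ω, (inner ℝ ((N : ℝ)⁻¹ • ∑ i, gf i (xhat ω))
      ((N : ℝ)⁻¹ • ∑ i, gf i (xt i ω)) : ℝ) ∂μ
  rw [I1', hunb] at I1
  have hmul := mul_le_mul_of_nonneg_left I2 hη.le
  have hexp : η * ((1 / 2 * C - L ^ 2 / 2 * D) - L ^ 2 / (2 * N) * S)
      = η / 2 * C - η * L ^ 2 / 2 * D - η * L ^ 2 / (2 * N) * S := by ring
  rw [hexp] at hmul
  linarith
end
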